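/- In every normal probe interval model of a connected probe interval graph, the vertex set of no column is a subset of the vertex set of a different column. -/

import Mathlib

open Set

/-- A set of columns is consecutive in the column order. -/
def ConsecSet {k : ℕ} (A : Set (Fin k)) : Prop :=
  ∀ i j l : Fin k, i ≤ j → j ≤ l → i ∈ A → l ∈ A → j ∈ A

/-- Every row of the 0-1 matrix `M` has a nonempty consecutive block of 1's. -/
def RowsOK {V : Type} {k : ℕ} (M : V → Fin k → Prop) : Prop :=
  ∀ v : V, {j | M v j}.Nonempty ∧ ConsecSet {j | M v j}

/-- The matrix `M` represents exactly the adjacencies of `G`, where `P` is the probe set: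
two distinct vertices are adjacent iff some column has a 1 in both rows and at least
one of the two vertices is a probe. -/
def Represents {V : Type} {k : ℕ} (G : SimpleGraph V) (P : Set V)
    (M : V → Fin k → Prop) : Prop :=
  ∀ u v : V, u ≠ v → (G.Adj u v ↔ (u ∈ P ∨ v ∈ P) ∧ ∃ j, M u j ∧ M v j)

/-- `M` is a probe interval model of `G` with probe set `P`. -/
def IsPIModel {V : Type} {k : ℕ} (G : SimpleGraph V) (P : Set V)
    (M : V → Fin k → Prop) : Prop :=
  RowsOK M ∧ Represents G P M

/-- The pairs of vertices that the matrix represents as adjacent. -/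
def RepAdj {V : Type} {k : ℕ} (P : Set V) (M : V → Fin k → Prop) (u v : V) : Prop :=
  u ≠ v ∧ (u ∈ P ∨ v ∈ P) ∧ ∃ j, M u j ∧ M v j

/-- `c` is the left endpoint of row `v`: the first column where the row has a 1. -/
def IsLeftEnd {V : Type} {k : ℕ} (M : V → Fin k → Prop) (v : V) (c : Fin k) : Prop :=
  M v c ∧ ∀ j, M v j → c ≤ j

/-- `c` is the right endpoint of row `v`: the last column where the row has a 1. -/
def IsRightEnd {V : Type} {k : ℕ} (M : V → Fin k → Prop) (v : V) (c : Fin k) : Prop :=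
  M v c ∧ ∀ j, M v j → j ≤ c

/-- A proper left endpoint: the left endpoint of a row with a 1 in more than one column. -/
def IsProperLeftEnd {V : Type} {k : ℕ} (M : V → Fin k → Prop) (v : V) (c : Fin k) : Prop :=
  IsLeftEnd M v c ∧ ∃ j, M v j ∧ j ≠ c

/-- A proper right endpoint: the right endpoint of a row with a 1 in more than one column. -/
def IsProperRightEnd {V : Type} {k : ℕ} (M : V → Fin k → Prop) (v : V) (c : Fin k) : Prop :=
  IsRightEnd M v c ∧ ∃ j, M v j ∧ j ≠ c

/-- `M'` is obtained from `M` by a contraction of row `v`: the first or last 1 of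
row `v` is changed to a 0, resulting in a shorter (still nonempty) interval. -/
def Contraction {V : Type} {k : ℕ} (M M' : V → Fin k → Prop) (v : V) : Prop :=
  ∃ c : Fin k, (IsProperLeftEnd M v c ∨ IsProperRightEnd M v c) ∧
    ∀ u j, M' u j ↔ M u j ∧ ¬(u = v ∧ j = c)

/-- Row `v` is taut: every contraction of it changes the set of vertex pairs that
the matrix represents as adjacent. -/
def TautRow {V : Type} {k : ℕ} (P : Set V) (M : V → Fin k → Prop) (v : V) : Prop :=
  ∀ M' : V → Fin k → Prop, Contraction M M' v → RepAdj P M' ≠ RepAdj P M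

/-- Every row of the model is taut. -/
def Taut {V : Type} {k : ℕ} (P : Set V) (M : V → Fin k → Prop) : Prop :=
  ∀ v : V, TautRow P M v

/-- The matrix obtained from `M` by merging the consecutive columns `i` and `i + 1`
(replacing them by their entrywise OR). -/
def mergeCols {V : Type} {k : ℕ} (M : V → Fin k → Prop) (i : ℕ) :
    V → Fin (k - 1) → Prop := fun v j =>
  if h1 : j.val < i then M v ⟨j.val, by have := j.isLt; omega⟩
  else if h2 : j.val = i then
    M v ⟨i, by have := j.isLt; omega⟩ ∨ M v ⟨i + 1, by have := j.isLt; omega⟩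
  else M v ⟨j.val + 1, by have := j.isLt; omega⟩

/-- The consecutive columns `i` and `i + 1` of the model `M` of `G` can be merged:
replacing them by their entrywise OR again yields a probe interval model representing
the same adjacencies. -/
def CanMerge {V : Type} {k : ℕ} (G : SimpleGraph V) (P : Set V)
    (M : V → Fin k → Prop) (i : ℕ) : Prop :=
  i + 1 < k ∧ IsPIModel G P (mergeCols M i)

/-- No two consecutive columns of the model can be merged. -/
def MinimalModel {V : Type} {k : ℕ} (G : SimpleGraph V) (P : Set V)
    (M : V → Fin k → Prop) : Prop :=
  ∀ i : ℕ, ¬ CanMerge G P M i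

/-- A normal probe interval model: a probe interval model that is taut and minimal. -/
def IsNormalModel {V : Type} {k : ℕ} (G : SimpleGraph V) (P : Set V)
    (M : V → Fin k → Prop) : Prop :=
  IsPIModel G P M ∧ Taut P M ∧ MinimalModel G P M

/-- The vertex set of a column: the vertices whose rows have a 1 in that column. -/
def colVerts {V : Type} {k : ℕ} (M : V → Fin k → Prop) (j : Fin k) : Set V :=
  {v | M v j}

/-- The probe set of a column. -/
def probeSetCol {V : Type} {k : ℕ} (P : Set V) (M : V → Fin k → Prop)
    (j : Fin k) : Set V :=
  {v | v ∈ P ∧ M v j}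

/-- The probe set of the column with (natural number) index `n`, empty if out of range. -/
def probeSetAt {W : Type} {K : ℕ} (P : Set W) (M : W → Fin K → Prop) (n : ℕ) : Set W :=
  {v | v ∈ P ∧ ∃ hn : n < K, M v ⟨n, hn⟩}

/-- `G` is a probe interval graph with respect to the probe set `P`. -/
def IsPIGraph {V : Type} (G : SimpleGraph V) (P : Set V) : Prop :=
  ∃ (k : ℕ) (M : V → Fin k → Prop), IsPIModel G P M

/-- `x` is a simplicial non-probe: a non-probe whose neighborhood induces a
complete subgraph. -/
def SimpNonProbe {V : Type} (G : SimpleGraph V) (P : Set V) (x : V) : Prop :=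
  x ∉ P ∧ G.IsClique (G.neighborSet x)

/-- The set `N_S` of simplicial non-probes. -/
def setNS {V : Type} (G : SimpleGraph V) (P : Set V) : Set V :=
  {x | SimpNonProbe G P x}

/-- `K` is (the vertex set of) a maximal complete subgraph of `H`. -/
def IsMaxClique {W : Type} (H : SimpleGraph W) (K : Set W) : Prop :=
  H.IsClique K ∧ ∀ K' : Set W, H.IsClique K' → K ⊆ K' → K' = K

/-- `K` is (the vertex set of) a maximal complete subgraph of `G[P]`. -/
def IsMaxPClique {V : Type} (G : SimpleGraph V) (P : Set V) (K : Set V) : Prop :=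
  (K ⊆ P ∧ K.Pairwise G.Adj) ∧
    ∀ K' : Set V, K' ⊆ P → K'.Pairwise G.Adj → K ⊆ K' → K' = K

/-- A clique column: its vertex set contains a clique of `G[P]`. -/
def IsCliqueCol {V : Type} {k : ℕ} (G : SimpleGraph V) (P : Set V)
    (M : V → Fin k → Prop) (j : Fin k) : Prop :=
  ∃ K : Set V, IsMaxPClique G P K ∧ K ⊆ colVerts M j

/-- A left semi-clique column: it contains a proper right endpoint of a probe and a
proper left endpoint of a non-probe, but no left endpoint of a probe and no right
endpoint of a non-probe. -/
def IsLeftSemiCol {V : Type} {k : ℕ} (P : Set V) (M : V → Fin k → Prop)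
    (j : Fin k) : Prop :=
  (∃ p ∈ P, IsProperRightEnd M p j) ∧ (∃ x, x ∉ P ∧ IsProperLeftEnd M x j) ∧
    (∀ p ∈ P, ¬ IsLeftEnd M p j) ∧ (∀ x, x ∉ P → ¬ IsRightEnd M x j)

/-- A right semi-clique column (symmetric to a left semi-clique column). -/
def IsRightSemiCol {V : Type} {k : ℕ} (P : Set V) (M : V → Fin k → Prop)
    (j : Fin k) : Prop :=
  (∃ p ∈ P, IsProperLeftEnd M p j) ∧ (∃ x, x ∉ P ∧ IsProperRightEnd M x j) ∧
    (∀ p ∈ P, ¬ IsRightEnd M p j) ∧ (∀ x, x ∉ P → ¬ IsLeftEnd M x j)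

/-- A semi-clique column: a left or right semi-clique column. -/
def IsSemiCol {V : Type} {k : ℕ} (P : Set V) (M : V → Fin k → Prop)
    (j : Fin k) : Prop :=
  IsLeftSemiCol P M j ∨ IsRightSemiCol P M j

/-- A simplicial column: not a clique column, its vertex set contains a simplicial
non-probe, and it contains no endpoint of a non-simplicial non-probe. -/
def IsSimpCol {V : Type} {k : ℕ} (G : SimpleGraph V) (P : Set V)
    (M : V → Fin k → Prop) (j : Fin k) : Prop :=
  ¬ IsCliqueCol G P M j ∧ (∃ x, SimpNonProbe G P x ∧ M x j) ∧
    ∀ x, x ∉ P → ¬ SimpNonProbe G P x → ¬ IsLeftEnd M x j ∧ ¬ IsRightEnd M x j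

/-- The probe set of the induced subgraph `G - N_S` on `V \ N_S`. -/
def probesPS {V : Type} (G : SimpleGraph V) (P : Set V) : Set ↥((setNS G P)ᶜ) :=
  {v | (v : V) ∈ P}

/-- The graph `G**` on `V \ N_S`: its edges are those of `G - N_S` together with the
pairs `x y` of non-probes such that `N(x) ∩ N(y)` equals a clique of `G[P]` or
contains two nonadjacent vertices. -/
def Gss {V : Type} (G : SimpleGraph V) (P : Set V) : SimpleGraph ↥((setNS G P)ᶜ) :=
  SimpleGraph.fromRel (fun u v =>
    G.Adj (u : V) (v : V) ∨
      ((u : V) ∉ P ∧ (v : V) ∉ P ∧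
        ((∃ K : Set V, IsMaxPClique G P K ∧
            G.neighborSet (u : V) ∩ G.neighborSet (v : V) = K) ∨
          (∃ a b : V, a ∈ G.neighborSet (u : V) ∩ G.neighborSet (v : V) ∧
            b ∈ G.neighborSet (u : V) ∩ G.neighborSet (v : V) ∧
            a ≠ b ∧ ¬ G.Adj a b))))

/-- `M` is a consecutive-ones ordered clique matrix of `H`: it has one column per
maximal clique of `H`, with a 1 in row `v` and column `K` exactly when `v ∈ K`, and
the 1's in every row are consecutive. -/
def IsC1CliqueMatrix {W : Type} (H : SimpleGraph W) {k : ℕ}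
    (M : W → Fin k → Prop) : Prop :=
  (∃ f : Fin k → Set W, Function.Injective f ∧
      (∀ j, IsMaxClique H (f j)) ∧ (∀ K, IsMaxClique H K → ∃ j, f j = K) ∧
      (∀ v j, M v j ↔ v ∈ f j)) ∧
    ∀ v : W, ConsecSet {j | M v j}

/-- A 0-1 matrix (with rows indexed by `R`) has the consecutive-ones property. -/
def HasC1P {R : Type} {n : ℕ} (M : R → Fin n → Prop) : Prop :=
  ∃ σ : Equiv.Perm (Fin n), ∀ r, ConsecSet {j | M r (σ j)}

/-- Two sets properly overlap. -/
def ProperOverlap {α : Type} (A B : Set α) : Prop :=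
  (A ∩ B).Nonempty ∧ (A \ B).Nonempty ∧ (B \ A).Nonempty

/-!
If `colVerts M j ⊆ colVerts M j'`, then, since rows are intervals, every row through `j`
also passes through the column next to `j` on the side of `j'`. Merging two adjacent
columns one of which contains the other keeps every row an interval and keeps every pair
of rows that share a column sharing one, so the model was not minimal.
-/

section ColumnMerging

variable {V : Type} {k : ℕ}

def mergedCol (i : ℕ) (hik : i + 1 < k) (c : Fin k) : Fin (k - 1) :=
  ⟨if c.val ≤ i then c.val else c.val - 1, by have := c.isLt; split_ifs <;> omega⟩

lemma mergedCol_monotone (i : ℕ) (hik : i + 1 < k) : Monotone (mergedCol i hik) := by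
  intro c c' h
  simp only [mergedCol, Fin.le_def] at h ⊢
  split_ifs <;> omega

lemma mergedCol_surjective (i : ℕ) (hik : i + 1 < k) :
    Function.Surjective (mergedCol i hik) := by
  intro j
  refine ⟨⟨if j.val ≤ i then j.val else j.val + 1, by have := j.isLt; split_ifs <;> omega⟩, ?_⟩
  ext
  simp only [mergedCol]
  split_ifs <;> omega

lemma mergedCol_eq_iff (i : ℕ) (hik : i + 1 < k) {c c' : Fin k} :
    mergedCol i hik c = mergedCol i hik c' ↔
      c = c' ∨ (c.val = i ∧ c'.val = i + 1) ∨ (c.val = i + 1 ∧ c'.val = i) := by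
  simp only [mergedCol, Fin.ext_iff]
  split_ifs <;> omega

lemma mergeCols_iff (M : V → Fin k → Prop) (i : ℕ) (hik : i + 1 < k) (v : V)
    (j : Fin (k - 1)) :
    mergeCols M i v j ↔ ∃ c, M v c ∧ mergedCol i hik c = j := by
  have hj := j.isLt
  unfold mergeCols
  constructor
  · intro h
    split_ifs at h with h₁ h₂
    · exact ⟨_, h, by ext; simp only [mergedCol]; split_ifs <;> omega⟩
    · rcases h with h | h <;>
        exact ⟨_, h, by ext; simp only [mergedCol]; split_ifs <;> omega⟩
    · exact ⟨_, h, by ext; simp only [mergedCol]; split_ifs <;> omega⟩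
  · rintro ⟨c, hc, rfl⟩
    have hc' := c.isLt
    simp only [mergedCol]
    split_ifs <;> first
      | omega
      | exact (congrArg (M v) (Fin.ext (by simp only; omega))).mp hc
      | exact .inl ((congrArg (M v) (Fin.ext (by simp only; omega))).mp hc)
      | exact .inr ((congrArg (M v) (Fin.ext (by simp only; omega))).mp hc)

lemma ConsecSet.image_of_monotone_surjective {m : ℕ} {A : Set (Fin k)} (hA : ConsecSet A)
    {f : Fin k → Fin m} (hf : Monotone f) (hsurj : Function.Surjective f) :
    ConsecSet (f '' A) := by
  rintro _ j _ h₁ h₂ ⟨a, ha, rfl⟩ ⟨b, hb, rfl⟩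
  obtain ⟨c, rfl⟩ := hsurj j
  by_cases hac : a ≤ c
  · by_cases hcb : c ≤ b
    · exact ⟨c, hA a c b hac hcb ha hb, rfl⟩
    · exact ⟨b, hb, le_antisymm (hf (le_of_not_ge hcb)) h₂⟩
  · exact ⟨a, ha, le_antisymm h₁ (hf (le_of_not_ge hac))⟩

lemma rowsOK_mergeCols {M : V → Fin k → Prop} (h : RowsOK M) (i : ℕ) (hik : i + 1 < k) :
    RowsOK (mergeCols M i) := by
  intro v
  have hrow : {j | mergeCols M i v j} = mergedCol i hik '' {c | M v c} := by
    ext j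
    simp only [mem_ofPred_eq, mem_image, mergeCols_iff M i hik]
  rw [hrow]
  exact ⟨(h v).1.image _,
    (h v).2.image_of_monotone_surjective (mergedCol_monotone i hik) (mergedCol_surjective i hik)⟩

lemma exists_common_col_of_colVerts_subset_or {M : V → Fin k → Prop} {a b : Fin k}
    (h : colVerts M a ⊆ colVerts M b ∨ colVerts M b ⊆ colVerts M a) {u v : V}
    (hu : M u a) (hv : M v b) : ∃ c, M u c ∧ M v c :=
  h.elim (fun h => ⟨b, h hu, hv⟩) (fun h => ⟨a, hu, h hv⟩)

lemma exists_common_col_mergeCols_iff (M : V → Fin k → Prop) (i : ℕ) (hik : i + 1 < k)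
    (hsub : colVerts M ⟨i, by omega⟩ ⊆ colVerts M ⟨i + 1, hik⟩ ∨
      colVerts M ⟨i + 1, hik⟩ ⊆ colVerts M ⟨i, by omega⟩) (u v : V) :
    (∃ j, mergeCols M i u j ∧ mergeCols M i v j) ↔ ∃ c, M u c ∧ M v c := by
  simp only [mergeCols_iff M i hik]
  constructor
  · rintro ⟨_, ⟨a, ha, rfl⟩, ⟨b, hb, hab⟩⟩
    rcases (mergedCol_eq_iff i hik).1 hab with rfl | ⟨hb', ha'⟩ | ⟨hb', ha'⟩
    · exact ⟨b, ha, hb⟩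
    · obtain rfl : a = ⟨i + 1, hik⟩ := Fin.ext ha'
      obtain rfl : b = ⟨i, Nat.lt_of_succ_lt hik⟩ := Fin.ext hb'
      exact exists_common_col_of_colVerts_subset_or hsub.symm ha hb
    · obtain rfl : a = ⟨i, Nat.lt_of_succ_lt hik⟩ := Fin.ext ha'
      obtain rfl : b = ⟨i + 1, hik⟩ := Fin.ext hb'
      exact exists_common_col_of_colVerts_subset_or hsub ha hb
  · rintro ⟨c, hu, hv⟩
    exact ⟨_, ⟨c, hu, rfl⟩, ⟨c, hv, rfl⟩⟩

lemma IsPIModel.canMerge_of_colVerts_subset {G : SimpleGraph V} {P : Set V}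
    {M : V → Fin k → Prop} (hM : IsPIModel G P M) {i : ℕ} (hik : i + 1 < k)
    (hsub : colVerts M ⟨i, by omega⟩ ⊆ colVerts M ⟨i + 1, hik⟩ ∨
      colVerts M ⟨i + 1, hik⟩ ⊆ colVerts M ⟨i, by omega⟩) :
    CanMerge G P M i :=
  ⟨hik, rowsOK_mergeCols hM.1 i hik, fun u v huv => by
    rw [hM.2 u v huv, exists_common_col_mergeCols_iff M i hik hsub]⟩

lemma RowsOK.colVerts_subset_of_mem_uIcc {M : V → Fin k → Prop}
    (h : RowsOK M) {j j' c : Fin k} (hsub : colVerts M j ⊆ colVerts M j')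
    (hc : c ∈ uIcc j j') : colVerts M j ⊆ colVerts M c := by
  intro v hv
  rcases mem_uIcc.1 hc with ⟨h₁, h₂⟩ | ⟨h₁, h₂⟩
  · exact (h v).2 j c j' h₁ h₂ hv (hsub hv)
  · exact (h v).2 j' c j h₁ h₂ (hsub hv) hv

lemma MinimalModel.not_colVerts_subset {G : SimpleGraph V} {P : Set V}
    {M : V → Fin k → Prop} (hmin : MinimalModel G P M) (hM : IsPIModel G P M)
    {j j' : Fin k} (hne : j ≠ j') : ¬ colVerts M j ⊆ colVerts M j' := by
  intro hsub
  have hj := j.isLt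
  rcases lt_or_gt_of_ne hne with hlt | hlt
  · have hik : j.val + 1 < k := by have := j'.isLt; omega
    refine hmin j (hM.canMerge_of_colVerts_subset hik (.inl ?_))
    exact hM.1.colVerts_subset_of_mem_uIcc hsub
      (mem_uIcc_of_le (Fin.le_def.2 (by simp only; omega)) (Fin.le_def.2 (by simp only; omega)))
  · have hik : j.val - 1 + 1 < k := by omega
    have hj_eq : (⟨j.val - 1 + 1, hik⟩ : Fin k) = j := Fin.ext (by simp only; omega)
    refine hmin (j.val - 1) (hM.canMerge_of_colVerts_subset hik (.inr ?_))
    rw [hj_eq]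
    exact hM.1.colVerts_subset_of_mem_uIcc hsub
      (mem_uIcc_of_ge (Fin.le_def.2 (by simp only; omega)) (Fin.le_def.2 (by simp only; omega)))

end ColumnMerging

theorem stmt5_general {V : Type} (G : SimpleGraph V) (P : Set V)
    {k : ℕ} (M : V → Fin k → Prop) (hM : IsNormalModel G P M) :
    ∀ j j' : Fin k, j ≠ j' → ¬ colVerts M j ⊆ colVerts M j' :=
  fun _ _ hne => hM.2.2.not_colVerts_subset hM.1 hne

/-- In every normal probe interval model of a connected probe interval
graph, the vertex set of no column is a subset of the vertex set of a different column. -/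
theorem stmt5 {V : Type} (G : SimpleGraph V) (P : Set V)
    (hIndep : ∀ u v : V, u ∉ P → v ∉ P → ¬ G.Adj u v)
    (hConn : G.Connected)
    {k : ℕ} (M : V → Fin k → Prop) (hM : IsNormalModel G P M) :
    ∀ j j' : Fin k, j ≠ j' → ¬ colVerts M j ⊆ colVerts M j' :=
  stmt5_general G P M hM
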